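/- arXiv:1804.03582 — 3 statements merged into one kernel-verified Lean document; each statement's English description precedes it below -/
import Mathlib

section
/- Let N be a positive integer and let ℓ, m, n be integers with ℓ + m = n. Writing ℓ_i = ⌈ℓ/N⌉ if i < ℓ mod N and ⌊ℓ/N⌋ otherwise (and similarly for m and n), the components satisfy n_i = ℓ_i + m_{(i − (ℓ mod N)) mod N} for all 0 ≤ i < N, and n mod N = ((ℓ mod N) + (m mod N)) mod N. -/
/-! For `0 ≤ i < N` the component is an integer quotient, `k_i = -((i - k) / N)`: it counts
(with sign, for negative `k`) the `x ∈ [0, k)` with `x ≡ i (mod N)`. Splitting `[0, l + m)` into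
`[0, l)` and the translate by `l` of `[0, m)` gives `n_i = l_i + m_j` with `j ≡ i - l (mod N)`;
in quotient form this is just division with remainder of `i - l` by `N`. -/

/-- The `i`-th component of the tuple encoding `⟨k⟩_N`. -/
def tupleComp (N : ℕ) (k i : ℤ) : ℤ :=
  if i < k % N then ⌈(k : ℚ) / N⌉ else ⌊(k : ℚ) / N⌋

theorem Int.sub_ediv_of_nonneg_of_lt {N i : ℤ} (k : ℤ) (hi : 0 ≤ i) (hiN : i < N) :
    (i - k) / N = -(k / N) - if i < k % N then 1 else 0 := by
  have hN : 0 < N := hi.trans_lt hiN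
  have hk := Int.emod_add_mul_ediv k N
  have hr := Int.emod_nonneg k hN.ne'
  have hrN := Int.emod_lt_of_pos k hN
  refine ((Int.ediv_emod_unique (r := i - k % N + if i < k % N then N else 0) hN).mpr ?_).1
  split_ifs <;> refine ⟨by linarith, by linarith, by linarith⟩

theorem tupleComp_eq_neg_sub_ediv (N : ℕ) (k : ℤ) {i : ℤ} (hi : 0 ≤ i) (hiN : i < N) :
    tupleComp N k i = -((i - k) / N) := by
  rw [tupleComp, Rat.ceil_intCast_div_natCast, Rat.floor_intCast_div_natCast,
    Int.sub_ediv_of_nonneg_of_lt k hi hiN]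
  split_ifs with h
  · -- `⌈k / N⌉ = -((-k) / N)` is the case `i = 0` of the quotient formula.
    have hneg := Int.sub_ediv_of_nonneg_of_lt (N := N) k le_rfl (hi.trans_lt hiN)
    rw [zero_sub, if_pos (hi.trans_lt h)] at hneg
    rw [hneg]
  · ring

theorem Int.sub_add_ediv (N i l m : ℤ) :
    (i - (l + m)) / N = (i - l) / N + ((i - l) % N - m) / N := by
  rcases eq_or_ne N 0 with rfl | hN
  · simp
  have hsplit : i - (l + m) = ((i - l) % N - m) + N * ((i - l) / N) := by
    linarith [Int.emod_add_mul_ediv (i - l) N]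
  rw [hsplit, Int.add_mul_ediv_left _ _ hN, add_comm]

theorem stmt2_general (N : ℕ) (l m n : ℤ) (h : l + m = n) :
    (∀ i : ℤ, 0 ≤ i → i < N →
      tupleComp N n i = tupleComp N l i + tupleComp N m ((i - l % N) % N)) ∧
    n % N = (l % N + m % N) % N := by
  subst h
  refine ⟨fun i hi hiN => ?_, Int.add_emod l m N⟩
  have hN : (0 : ℤ) < N := hi.trans_lt hiN
  rw [Int.sub_emod_emod, tupleComp_eq_neg_sub_ediv N _ hi hiN,
    tupleComp_eq_neg_sub_ediv N _ hi hiN, tupleComp_eq_neg_sub_ediv N _ (Int.emod_nonneg _ hN.ne') (Int.emod_lt_of_pos _ hN),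
    Int.sub_add_ediv]
  ring

theorem stmt2 (N : ℕ) (hN : 0 < N) (l m n : ℤ) (h : l + m = n) :
    (∀ i : ℤ, 0 ≤ i → i < N →
      tupleComp N n i = tupleComp N l i + tupleComp N m ((i - l % N) % N)) ∧
    n % N = (l % N + m % N) % N :=
  stmt2_general N l m n h
end

section
/- Let A be a quasi-acyclic distributed automaton with k states running on a labeled directed path v_1 v_2 ⋯ v_n, with run ρ = (ρ_0, ρ_1, …) where ρ_{j+1}(v_i) = δ(ρ_j(v_{i−1}), ρ_j(v_i)) for i > 1 and ρ_{j+1}(v_1) = δ(⊥, ρ_j(v_1)). Then for each i ∈ {1, …, n} and each j > k·i, we have ρ_j(v_i) = ρ_{j−1}(v_i). In particular every node's state sequence is eventually constant. -/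
/-!
A node whose input is constant from time `T` on evolves by iterating the single map
`δ p`. On a finite state set every orbit of a map reaches a periodic point within `|Q|`
steps, and finiteness of the set of traces forbids proper cycles, so that periodic point
is fixed. Induction along the path: node `i` sees a constant input from time `k * i` on,
hence is constant from time `k * (i + 1)` on.
-/

/-- A trace of a distributed automaton: a nonempty sequence of states with
adjacent states distinct and each step realized by the transition function. -/
def IsTrace {Q : Type*} (δ : Option Q → Q → Q) (l : List Q) : Prop :=
  l ≠ [] ∧ l.Chain' (fun a b => a ≠ b ∧ ∃ p : Option Q, δ p a = b)

/-- The synchronous run of a distributed automaton on a labeled directed path. -/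
def daRun {A Q : Type*} (init : A → Q) (δ : Option Q → Q → Q) {n : ℕ}
    (labels : Fin n → A) : ℕ → Fin n → Q
  | 0, i => init (labels i)
  | j + 1, i =>
      δ (if i.1 = 0 then none
         else some (daRun init δ labels j ⟨i.1 - 1, Nat.lt_of_le_of_lt (Nat.sub_le _ _) i.2⟩))
        (daRun init δ labels j i)

open Function

lemma not_finite_setOf_isTrace_of_walk {Q : Type*} (δ : Option Q → Q → Q) (w : ℕ → Q)
    (hw : ∀ z, w z ≠ w (z + 1) ∧ ∃ p : Option Q, δ p (w z) = w (z + 1)) :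
    ¬ {l : List Q | IsTrace δ l}.Finite := by
  have hinj : Injective (fun m : ℕ => (List.range (m + 1)).map w) := fun a b hab => by
    simpa using congrArg List.length hab
  have hmem : ∀ m : ℕ, (List.range (m + 1)).map w ∈ {l : List Q | IsTrace δ l} := fun m =>
    ⟨by simp, (List.isChain_map w).mpr ((List.isChain_range_succ _ m).mpr fun z _ => hw z)⟩
  exact Set.infinite_of_injective_forall_mem hinj hmem

lemma isFixedPt_of_isPeriodicPt_of_finite {Q : Type*} {δ : Option Q → Q → Q}
    (hfin : {l : List Q | IsTrace δ l}.Finite) (p : Option Q) {n : ℕ} {y : Q} (hn : 0 < n)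
    (hper : IsPeriodicPt (δ p) n y) : IsFixedPt (δ p) y := by
  by_contra hy
  refine not_finite_setOf_isTrace_of_walk δ (fun z => (δ p)^[z] y) (fun z => ⟨?_, p, ?_⟩) hfin
  · intro hz
    have hfix : IsFixedPt (δ p) ((δ p)^[z] y) := by
      rw [IsFixedPt, ← iterate_succ_apply' (δ p), ← hz]
    -- `y` returns to itself at time `n * z ≥ z`, after the orbit has already stopped
    have hback : (δ p)^[n * z - z] ((δ p)^[z] y) = y := by
      rw [← iterate_add_apply, Nat.sub_add_cancel (Nat.le_mul_of_pos_left z hn)]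
      exact (hper.mul_const z).eq
    rw [(hfix.iterate _).eq] at hback
    exact hy (hback ▸ hfix)
  · exact (iterate_succ_apply' (δ p) z y).symm

lemma exists_isPeriodicPt_iterate_of_le_card {α : Type*} [Fintype α] (f : α → α) (x : α) :
    ∃ a ≤ Fintype.card α, ∃ n, 0 < n ∧ IsPeriodicPt f n (f^[a] x) := by
  obtain ⟨i, j, hij, heq⟩ :=
    Fintype.exists_ne_map_eq_of_card_lt (fun i : Fin (Fintype.card α + 1) => f^[i] x) (by simp)
  have key : ∀ a b : ℕ, a < b → f^[a] x = f^[b] x → IsPeriodicPt f (b - a) (f^[a] x) :=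
    fun a b hab h => by
      rw [IsPeriodicPt, IsFixedPt, ← iterate_add_apply, Nat.sub_add_cancel hab.le, h]
  rcases Nat.lt_or_gt_of_ne (Fin.val_ne_of_ne hij) with hlt | hlt
  · exact ⟨i, Nat.lt_succ_iff.mp i.2, j - i, by omega, key i j hlt heq⟩
  · exact ⟨j, Nat.lt_succ_iff.mp j.2, i - j, by omega, key j i hlt heq.symm⟩

lemma isFixedPt_iterate_card {α : Type*} [Fintype α] {f : α → α}
    (hf : ∀ n y, 0 < n → IsPeriodicPt f n y → IsFixedPt f y) (x : α) :
    IsFixedPt f (f^[Fintype.card α] x) := by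
  obtain ⟨a, ha, n, hn, hper⟩ := exists_isPeriodicPt_iterate_of_le_card f x
  have hfix := hf n _ hn hper
  rw [← Nat.sub_add_cancel ha, iterate_add_apply, (hfix.iterate _).eq]
  exact hfix

lemma eq_iterate_card_of_forall_succ_eq {α : Type*} [Fintype α] {f : α → α}
    (hf : ∀ n y, 0 < n → IsPeriodicPt f n y → IsFixedPt f y) {S : ℕ → α} {T : ℕ}
    (hS : ∀ u, T ≤ u → S (u + 1) = f (S u)) :
    ∀ u, T + Fintype.card α ≤ u → S u = f^[Fintype.card α] (S T) := by
  have horbit : ∀ m, S (T + m) = f^[m] (S T) := by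
    intro m
    induction m with
    | zero => rfl
    | succ m ih => rw [← add_assoc, hS _ (Nat.le_add_right T m), ih, iterate_succ_apply']
  intro u hu
  obtain ⟨m, rfl⟩ := Nat.exists_eq_add_of_le hu
  rw [add_assoc, horbit, add_comm, iterate_add_apply, ((isFixedPt_iterate_card hf _).iterate _).eq]

section daRun

variable {A Q : Type*} (init : A → Q) (δ : Option Q → Q → Q) {n : ℕ} (labels : Fin n → A)

lemma daRun_succ_of_val_eq_zero (j : ℕ) {i : Fin n} (hi : i.1 = 0) :
    daRun init δ labels (j + 1) i = δ none (daRun init δ labels j i) := by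
  simp [daRun, hi]

lemma daRun_succ_of_val_eq_succ (j : ℕ) {m : ℕ} (hm : m < n) {i : Fin n} (hi : i.1 = m + 1) :
    daRun init δ labels (j + 1) i =
      δ (some (daRun init δ labels j ⟨m, hm⟩)) (daRun init δ labels j i) := by
  simp only [daRun, hi, Nat.add_one_ne_zero, if_false, Nat.add_sub_cancel]

lemma daRun_eq_of_le [Fintype Q] (hfin : {l : List Q | IsTrace δ l}.Finite) (i : Fin n)
    {j : ℕ} (hj : Fintype.card Q * (i.1 + 1) ≤ j) :
    daRun init δ labels j i = daRun init δ labels (Fintype.card Q * (i.1 + 1)) i := by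
  have hacyc :
      ∀ p : Option Q, ∀ n y, 0 < n → IsPeriodicPt (δ p) n y → IsFixedPt (δ p) y :=
    fun p _ _ hn hper => isFixedPt_of_isPeriodicPt_of_finite hfin p hn hper
  obtain ⟨m, hi⟩ : ∃ m, i.1 = m := ⟨_, rfl⟩
  induction m generalizing i j with
  | zero =>
    have hstab := eq_iterate_card_of_forall_succ_eq (hacyc none)
      (S := fun j => daRun init δ labels j i) (T := 0)
      fun u _ => daRun_succ_of_val_eq_zero init δ labels u hi
    rw [hi] at hj ⊢
    exact (hstab j (by omega)).trans (hstab _ (by omega)).symm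
  | succ m ih =>
    have hm : m < n := by omega
    set T := Fintype.card Q * (m + 1)
    have hstab :=
      eq_iterate_card_of_forall_succ_eq (hacyc (some (daRun init δ labels T ⟨m, hm⟩)))
      (S := fun j => daRun init δ labels j i) (T := T) fun u hu => by
        rw [daRun_succ_of_val_eq_succ init δ labels u hm hi, ih ⟨m, hm⟩ hu rfl]
    rw [hi, mul_add_one] at hj ⊢
    exact (hstab j (by omega)).trans (hstab _ (by omega)).symm

end daRun

theorem stmt6 {A Q : Type*} [Fintype Q] (k : ℕ) (hk : Fintype.card Q = k)
    (init : A → Q) (δ : Option Q → Q → Q)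
    (hQA : {l : List Q | IsTrace δ l}.Finite)
    {n : ℕ} (labels : Fin n → A) :
    ∀ (i : Fin n) (j : ℕ), k * (i.1 + 1) < j →
      daRun init δ labels j i = daRun init δ labels (j - 1) i := by
  intro i j hj
  subst hk
  exact (daRun_eq_of_le init δ labels hQA i hj.le).trans
    (daRun_eq_of_le init δ labels hQA i (j := j - 1) (by omega)).symm
end

section
/- Let A = (Q, λ, δ, F) be a distributed automaton whose history transition function δ̂ : (Q ∪ {⊥})^ω × Q → Q^ω is defined recursively by δ̂(p·π, q) = q · δ̂(π, δ(p, q)). If A is quasi-acyclic (every trace visits pairwise distinct states, and the set of traces is finite with maximum length T) and the input sequence π ∈ (Q ∪ {⊥})^ω is ultimately constant, then the output sequence δ̂(π, q) is ultimately constant for every q ∈ Q. -/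
/-- The history transition function `δ̂`: `histOut δ π q n` is the `n`-th state
of the node with initial state `q` whose predecessor's state sequence is `π`. -/
def histOut {Q : Type*} (δ : Option Q → Q → Q) (π : ℕ → Option Q) (q : Q) : ℕ → Q
  | 0 => q
  | n + 1 => δ (π n) (histOut δ π q n)

/-!
The successive states of a node, with repetitions collapsed, form a trace. A bound on the length of
traces therefore bounds the number of state changes, so the state sequence is ultimately constant.
-/

open Filter Set

theorem Monotone.eventuallyConst_of_bddAbove {f : ℕ → ℕ} (hf : Monotone f)
    (hb : BddAbove (range f)) : atTop.EventuallyConst f := by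
  obtain ⟨N, hN⟩ := Nat.sSup_mem (range_nonempty f) hb
  exact eventuallyConst_atTop.2
    ⟨N, fun n hn => le_antisymm (hN ▸ le_csSup hb ⟨n, rfl⟩) (hf hn)⟩

section RunValues

variable {α : Type*} (x : ℕ → α)

open scoped Classical in
/-- The values of the maximal constant runs of `x` on `[0, n]`, latest first. -/
noncomputable def revRunValues : ℕ → List α
  | 0 => [x 0]
  | n + 1 => if x (n + 1) = x n then revRunValues n else x (n + 1) :: revRunValues n

theorem revRunValues_eq_cons (n : ℕ) : ∃ t, revRunValues x n = x n :: t := by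
  induction n with
  | zero => exact ⟨[], rfl⟩
  | succ n ih =>
    rw [revRunValues]
    split_ifs with h
    · rwa [h]
    · exact ⟨_, rfl⟩

theorem revRunValues_ne_nil (n : ℕ) : revRunValues x n ≠ [] := by
  obtain ⟨t, ht⟩ := revRunValues_eq_cons x n
  exact ht ▸ List.cons_ne_nil _ _

theorem length_revRunValues_succ_of_ne {n : ℕ} (h : x (n + 1) ≠ x n) :
    (revRunValues x (n + 1)).length = (revRunValues x n).length + 1 := by
  rw [revRunValues, if_neg h, List.length_cons]

theorem monotone_length_revRunValues : Monotone fun n => (revRunValues x n).length := by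
  refine monotone_nat_of_le_succ fun n => ?_
  by_cases h : x (n + 1) = x n
  · simp only [revRunValues, if_pos h, le_refl]
  · rw [length_revRunValues_succ_of_ne x h]
    exact Nat.le_succ _

theorem isChain_reverse_revRunValues {S : α → α → Prop} (hx : ∀ n, S (x n) (x (n + 1)))
    (n : ℕ) : (revRunValues x n).reverse.IsChain (fun a b => a ≠ b ∧ S a b) := by
  rw [List.isChain_reverse]
  induction n with
  | zero => exact List.isChain_singleton _
  | succ n ih =>
    rw [revRunValues]
    split_ifs with h
    · exact ih
    · obtain ⟨t, ht⟩ := revRunValues_eq_cons x n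
      rw [ht] at ih ⊢
      exact .cons_cons ⟨Ne.symm h, hx n⟩ ih

theorem eventuallyConst_of_eventuallyConst_length_revRunValues
    (h : atTop.EventuallyConst fun n => (revRunValues x n).length) : atTop.EventuallyConst x := by
  obtain ⟨N, hN⟩ := eventuallyConst_atTop_nat.1 h
  refine eventuallyConst_atTop_nat.2 ⟨N, fun n hn => ?_⟩
  by_contra hne
  have := hN n hn
  rw [length_revRunValues_succ_of_ne x hne] at this
  omega

end RunValues

theorem eventuallyConst_of_isChain_length_le {α : Type*} {S : α → α → Prop} {x : ℕ → α}
    (hx : ∀ n, S (x n) (x (n + 1))) {T : ℕ}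
    (hT : ∀ l : List α, l ≠ [] → l.IsChain (fun a b => a ≠ b ∧ S a b) → l.length ≤ T) :
    atTop.EventuallyConst x := by
  have hbdd : BddAbove (range fun n => (revRunValues x n).length) :=
    ⟨T, forall_mem_range.2 fun n => (List.length_reverse (as := revRunValues x n)) ▸
      hT _ (List.reverse_ne_nil_iff.2 (revRunValues_ne_nil x n)) (isChain_reverse_revRunValues x hx n)⟩
  exact eventuallyConst_of_eventuallyConst_length_revRunValues x
    ((monotone_length_revRunValues x).eventuallyConst_of_bddAbove hbdd)

theorem stmt14_general {Q : Type*} (δ : Option Q → Q → Q)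
    (T : ℕ) (hT : ∀ l : List Q, IsTrace δ l → l.length ≤ T)
    (π : ℕ → Option Q)
    (q : Q) :
    ∃ N : ℕ, ∀ n, N ≤ n → histOut δ π q n = histOut δ π q N :=
  eventuallyConst_atTop.1 <| eventuallyConst_of_isChain_length_le (S := fun a b => ∃ p, δ p a = b)
    (fun n => ⟨π n, rfl⟩) fun l hne hl => hT l ⟨hne, hl⟩

theorem stmt14 {Q : Type*} [Fintype Q] (δ : Option Q → Q → Q)
    (hQA : {l : List Q | IsTrace δ l}.Finite)
    (T : ℕ) (hT : ∀ l : List Q, IsTrace δ l → l.length ≤ T)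
    (π : ℕ → Option Q) (hπ : ∃ (N : ℕ) (p : Option Q), ∀ n, N ≤ n → π n = p)
    (q : Q) :
    ∃ N : ℕ, ∀ n, N ≤ n → histOut δ π q n = histOut δ π q N :=
  stmt14_general δ T hT π q
end
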